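/- Let B and B' be two distinct vertex-resilient blocks of a directed graph G. Then |B ∩ B'| ≤ 1. -/

import Mathlib

variable {V : Type*}

/-- Mutual reachability (strong connectivity of a pair) in the digraph `E`. -/
def SConn (E : V → V → Prop) (u v : V) : Prop :=
  Relation.ReflTransGen E u v ∧ Relation.ReflTransGen E v u

/-- The digraph obtained from `E` by deleting vertex `w` (and incident edges). -/
def delV (E : V → V → Prop) (w : V) : V → V → Prop :=
  fun a b => E a b ∧ a ≠ w ∧ b ≠ w

/-- The digraph obtained from `E` by deleting the single edge `(a,b)`. -/
def delE (E : V → V → Prop) (a b : V) : V → V → Prop :=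
  fun x y => E x y ∧ ¬(x = a ∧ y = b)

/-- `u` and `v` are vertex-resilient: they are distinct and remain strongly
connected after deletion of any single other vertex. -/
def VRes (E : V → V → Prop) (u v : V) : Prop :=
  u ≠ v ∧ ∀ w, w ≠ u → w ≠ v → SConn (delV E w) u v

/-- A vertex-resilient block: a maximal set of size ≥ 2 of pairwise
vertex-resilient vertices. -/
def IsVRBlock (E : V → V → Prop) (B : Set V) : Prop :=
  B.Pairwise (VRes E) ∧ (∃ a ∈ B, ∃ b ∈ B, a ≠ b) ∧
    ∀ B' : Set V, B ⊆ B' → B'.Pairwise (VRes E) → B' = B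

/-- `l` is (the vertex list of) a directed path from `u` to `v` in `E`. -/
def IsPathList (E : V → V → Prop) (u v : V) (l : List V) : Prop :=
  l.Chain' E ∧ l.head? = some u ∧ l.getLast? = some v

/-- The internal vertices of a path given as a vertex list. -/
def internalsL (l : List V) : List V := (l.drop 1).dropLast

/-- The edges of a path given as a vertex list. -/
def edgesOfL (l : List V) : List (V × V) := l.zip l.tail

/-- There exist two internally vertex-disjoint (simple, distinct) paths from `u` to `v`. -/
def TwoVPaths (E : V → V → Prop) (u v : V) : Prop :=
  ∃ l₁ l₂ : List V, IsPathList E u v l₁ ∧ IsPathList E u v l₂ ∧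
    l₁.Nodup ∧ l₂.Nodup ∧ l₁ ≠ l₂ ∧ ∀ x ∈ internalsL l₁, x ∉ internalsL l₂

/-- `u` and `v` are 2-vertex-connected. -/
def TwoVConn (E : V → V → Prop) (u v : V) : Prop :=
  u ≠ v ∧ TwoVPaths E u v ∧ TwoVPaths E v u

/-- There exist two edge-disjoint paths from `u` to `v`. -/
def TwoEPaths (E : V → V → Prop) (u v : V) : Prop :=
  ∃ l₁ l₂ : List V, IsPathList E u v l₁ ∧ IsPathList E u v l₂ ∧
    ∀ e ∈ edgesOfL l₁, e ∉ edgesOfL l₂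

/-- `u` and `v` are 2-edge-connected. -/
def TwoEConn (E : V → V → Prop) (u v : V) : Prop :=
  u ≠ v ∧ TwoEPaths E u v ∧ TwoEPaths E v u

/-- A 2-vertex-connected block. -/
def Is2VBlock (E : V → V → Prop) (B : Set V) : Prop :=
  B.Pairwise (TwoVConn E) ∧ (∃ a ∈ B, ∃ b ∈ B, a ≠ b) ∧
    ∀ B' : Set V, B ⊆ B' → B'.Pairwise (TwoVConn E) → B' = B

/-- A 2-edge-connected block. -/
def Is2EBlock (E : V → V → Prop) (B : Set V) : Prop :=
  B.Pairwise (TwoEConn E) ∧ (∃ a ∈ B, ∃ b ∈ B, a ≠ b) ∧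
    ∀ B' : Set V, B ⊆ B' → B'.Pairwise (TwoEConn E) → B' = B

/-- The digraph `E` is strongly connected. -/
def StronglyConn (E : V → V → Prop) : Prop :=
  ∀ u v, Relation.ReflTransGen E u v

/-- `(a,b)` is a strong bridge of the strongly connected digraph `E`. -/
def IsStrongBridge (E : V → V → Prop) (a b : V) : Prop :=
  E a b ∧ ¬ StronglyConn (delE E a b)

/-- `u` dominates `w` in the flow graph with start vertex `s`:
every path from `s` to `w` contains `u`. -/
def DomOf (E : V → V → Prop) (s u w : V) : Prop :=
  ∀ l : List V, IsPathList E s w l → u ∈ l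

/-- `d` is the immediate dominator of `w` in the flow graph with start `s`:
the proper dominator of `w` dominated by all proper dominators of `w`. -/
def IdomOf (E : V → V → Prop) (s d w : V) : Prop :=
  d ≠ w ∧ DomOf E s d w ∧ ∀ u, u ≠ w → DomOf E s u w → DomOf E s u d

/-- The block graph `F` of the digraph `E`: the bipartite undirected graph on the
vertices of `E` together with its vertex-resilient blocks, a vertex `u` being
adjacent to a block node `B` exactly when `u ∈ B`. -/
def blockGraph (E : V → V → Prop) :
    SimpleGraph (V ⊕ {B : Set V // IsVRBlock E B}) where
  Adj a b := ∃ u B, u ∈ B.1 ∧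
    ((a = Sum.inl u ∧ b = Sum.inr B) ∨ (a = Sum.inr B ∧ b = Sum.inl u))
  symm := by
    constructor
    rintro a b ⟨u, B, hm, (⟨rfl, rfl⟩ | ⟨rfl, rfl⟩)⟩
    · exact ⟨u, B, hm, Or.inr ⟨rfl, rfl⟩⟩
    · exact ⟨u, B, hm, Or.inl ⟨rfl, rfl⟩⟩
  loopless := by
    constructor
    rintro a ⟨u, B, hm, (⟨rfl, h⟩ | ⟨rfl, h⟩)⟩ <;> simp at h

/-! The union of two pairwise vertex-resilient sets sharing two vertices `a ≠ b` is again pairwise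
vertex-resilient: after deleting any vertex `w`, one of `a`, `b` survives and strongly connects
each vertex of the first set with each vertex of the second. Maximality of blocks then forces two
blocks with two common vertices to coincide. -/

section

variable {E : V → V → Prop}

theorem SConn.trans {x y z : V} (hxy : SConn E x y) (hyz : SConn E y z) :
    SConn E x z :=
  ⟨hxy.1.trans hyz.1, hyz.2.trans hxy.2⟩

theorem SConn.symm {x y : V} (h : SConn E x y) : SConn E y x :=
  ⟨h.2, h.1⟩

theorem VRes.symm {x y : V} (h : VRes E x y) : VRes E y x :=
  ⟨h.1.symm, fun w hwy hwx => (h.2 w hwx hwy).symm⟩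

theorem VRes.of_two_hubs {x y a b : V} (hab : a ≠ b) (hxy : x ≠ y)
    (hxa : VRes E x a) (hxb : VRes E x b) (hay : VRes E a y) (hby : VRes E b y) :
    VRes E x y := by
  refine ⟨hxy, fun w hwx hwy => ?_⟩
  obtain ⟨c, hwc, hxc, hcy⟩ : ∃ c, w ≠ c ∧ VRes E x c ∧ VRes E c y := by
    by_cases hwa : w = a
    · exact ⟨b, hwa ▸ hab, hxb, hby⟩
    · exact ⟨a, hwa, hxa, hay⟩
  exact (hxc.2 w hwx hwc).trans (hcy.2 w hwc hwy)

theorem pairwise_vRes_union {S T : Set V} {a b : V}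
    (hS : S.Pairwise (VRes E)) (hT : T.Pairwise (VRes E))
    (ha : a ∈ S ∩ T) (hb : b ∈ S ∩ T) (hab : a ≠ b) :
    (S ∪ T).Pairwise (VRes E) := by
  refine Set.pairwise_union.2 ⟨hS, hT, fun x hx y hy hxy => ?_⟩
  suffices VRes E x y from ⟨this, this.symm⟩
  by_cases hxT : x ∈ T
  · exact hT hxT hy hxy
  by_cases hyS : y ∈ S
  · exact hS hx hyS hxy
  have hxa : x ≠ a := fun h => hxT (h ▸ ha.2)
  have hxb : x ≠ b := fun h => hxT (h ▸ hb.2)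
  have hay : a ≠ y := fun h => hyS (h ▸ ha.1)
  have hby : b ≠ y := fun h => hyS (h ▸ hb.1)
  exact .of_two_hubs hab hxy (hS hx ha.1 hxa) (hS hx hb.1 hxb) (hT ha.2 hy hay) (hT hb.2 hy hby)

theorem IsVRBlock.eq_of_two_mem_inter {B B' : Set V}
    (hB : IsVRBlock E B) (hB' : IsVRBlock E B') {a b : V}
    (ha : a ∈ B ∩ B') (hb : b ∈ B ∩ B') (hab : a ≠ b) : B = B' := by
  have hU := pairwise_vRes_union hB.1 hB'.1 ha hb hab
  exact (hB.2.2 _ Set.subset_union_left hU).symm.trans (hB'.2.2 _ Set.subset_union_right hU)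

end

/-- two distinct vertex-resilient blocks share at most one vertex. -/
theorem stmt1 (E : V → V → Prop) (B B' : Set V)
    (hB : IsVRBlock E B) (hB' : IsVRBlock E B') (hne : B ≠ B') :
    (B ∩ B').ncard ≤ 1 := by
  have hsub : (B ∩ B').Subsingleton := fun a ha b hb =>
    by_contra fun hab => hne (hB.eq_of_two_mem_inter hB' ha hb hab)
  exact (Set.ncard_le_one_iff hsub.finite).2 fun ha hb => hsub ha hb
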